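/- arXiv:2512.22719 — 4 statements merged into one kernel-verified Lean document; each statement's English description precedes it below -/
import Mathlib

section
/- Under the general pressure law hypotheses there exist a constant C ≥ 1 and a threshold ρ₀ ∈ (0, ρ⋆] such that for all ρ ∈ (0, ρ₀]: C⁻¹ρ^{θ₁} ≤ K(ρ) ≤ Cρ^{θ₁}, where θ₁ = (γ₁−1)/2. -/
/-!
Near the vacuum `P = κ₁ ρ^γ₁ (1 + P₁)` with `P₁ = O(ρ^{γ₁-1})` and `P₁' = O(ρ^{γ₁-2})`, so
`P'(ρ) / ρ^{γ₁-1} = κ₁ (γ₁ (1 + P₁) + ρ P₁') → κ₁ γ₁ > 0`. Hence `P'` is pinched between two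
multiples of `ρ^{2θ₁}`, the integrand `√P'(y) / y` between two multiples of `y^{θ₁-1}`, and
integrating from `0` gives `K(ρ) ≍ ρ^{θ₁}`.
-/

open Real Set

/-- General pressure law hypotheses: `P ∈ C¹([0,∞)) ∩ C⁴((0,∞))`, strict hyperbolicity and
genuine nonlinearity for `ρ > 0`, and power-law expansions near the vacuum and the far field. -/
structure GeneralPressureLaw (P : ℝ → ℝ) (ρs ρS γ₁ γ₂ κ₁ κ₂ b Cs CS : ℝ) : Prop where
  ρs_pos : 0 < ρs
  ρs_lt_ρS : ρs < ρS
  one_lt_γ₂ : 1 < γ₂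
  γ₂_le_γ₁ : γ₂ ≤ γ₁
  γ₁_lt_three : γ₁ < 3
  κ₁_pos : 0 < κ₁
  κ₂_pos : 0 < κ₂
  b_pos : 0 < b
  Cs_pos : 0 < Cs
  CS_pos : 0 < CS
  smooth_C1 : ContDiffOn ℝ 1 P (Ici 0)
  smooth_C4 : ContDiffOn ℝ 4 P (Ioi 0)
  deriv_pos : ∀ ρ : ℝ, 0 < ρ → 0 < deriv P ρ
  genuinely_nonlinear : ∀ ρ : ℝ, 0 < ρ → 0 < 2 * deriv P ρ + ρ * deriv (deriv P) ρ
  expansion : ∃ P₁ P₂ : ℝ → ℝ,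
    ContDiffOn ℝ 4 P₁ (Ioi 0) ∧ ContDiffOn ℝ 4 P₂ (Ioi 0) ∧
    (∀ ρ : ℝ, 0 ≤ ρ → ρ < ρs → P ρ = κ₁ * ρ ^ γ₁ * (1 + P₁ ρ)) ∧
    (∀ ρ : ℝ, ρS ≤ ρ → P ρ = κ₂ * ρ ^ γ₂ * (1 + P₂ ρ)) ∧
    (∀ n : ℕ, n ≤ 4 → ∀ ρ : ℝ, 0 < ρ → ρ < ρs →
      |iteratedDeriv n P₁ ρ| ≤ Cs * ρ ^ (γ₁ - 1 - (n : ℝ))) ∧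
    (∀ n : ℕ, n ≤ 4 → ∀ ρ : ℝ, ρS ≤ ρ →
      |iteratedDeriv n P₂ ρ| ≤ CS * ρ ^ (-b - (n : ℝ)))

/-- The internal energy `e(ρ) = ∫₀^ρ P(y)/y² dy`. -/
noncomputable def internalEnergy (P : ℝ → ℝ) (ρ : ℝ) : ℝ := ∫ y in (0:ℝ)..ρ, P y / y ^ 2

/-- The function `K(ρ) = ∫₀^ρ √(P'(y))/y dy`. -/
noncomputable def Kfun (P : ℝ → ℝ) (ρ : ℝ) : ℝ := ∫ y in (0:ℝ)..ρ, Real.sqrt (deriv P y) / y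

open Filter Topology MeasureTheory

lemma tendsto_rpow_nhdsGT_zero {r : ℝ} (hr : 0 < r) :
    Tendsto (fun y : ℝ => y ^ r) (𝓝[>] 0) (𝓝 0) := by
  have h := (continuousAt_rpow_const 0 r (Or.inr hr.le)).tendsto
  rw [zero_rpow hr.ne'] at h
  exact h.mono_left nhdsWithin_le_nhds

lemma deriv_div_rpow_eq_of_eq_mul_rpow {P Q : ℝ → ℝ} {κ γ y : ℝ} (hy : 0 < y)
    (hP : P =ᶠ[𝓝 y] fun x => κ * x ^ γ * (1 + Q x)) (hQ : DifferentiableAt ℝ Q y) :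
    deriv P y / y ^ (γ - 1) = κ * (γ * (1 + Q y) + y * deriv Q y) := by
  have hderiv : HasDerivAt (fun x => κ * x ^ γ * (1 + Q x))
      (κ * (γ * y ^ (γ - 1)) * (1 + Q y) + κ * y ^ γ * deriv Q y) y :=
    ((hasDerivAt_rpow_const (Or.inl hy.ne')).const_mul κ).mul (hQ.hasDerivAt.const_add 1)
  have hpow : y ^ γ = y * y ^ (γ - 1) := by
    rw [rpow_sub hy, rpow_one, mul_div_cancel₀ _ hy.ne']
  rw [hP.deriv_eq, hderiv.deriv, hpow]
  field_simp [(rpow_pos_of_pos hy (γ - 1)).ne']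

lemma tendsto_deriv_div_rpow_nhdsGT_zero {P Q : ℝ → ℝ} {κ γ C ρs : ℝ} (hγ : 1 < γ)
    (hρs : 0 < ρs) (hQ : DifferentiableOn ℝ Q (Ioo 0 ρs))
    (hP : ∀ y, 0 < y → y < ρs → P y = κ * y ^ γ * (1 + Q y))
    (hQ₀ : ∀ y, 0 < y → y < ρs → |Q y| ≤ C * y ^ (γ - 1))
    (hQ₁ : ∀ y, 0 < y → y < ρs → |deriv Q y| ≤ C * y ^ (γ - 1 - 1)) :
    Tendsto (fun y => deriv P y / y ^ (γ - 1)) (𝓝[>] 0) (𝓝 (κ * γ)) := by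
  have hnear : ∀ᶠ y in 𝓝[>] 0, y ∈ Ioo 0 ρs := Ioo_mem_nhdsGT hρs
  have hsmall : Tendsto (fun y : ℝ => C * y ^ (γ - 1)) (𝓝[>] 0) (𝓝 0) := by
    simpa using (tendsto_rpow_nhdsGT_zero (sub_pos.mpr hγ)).const_mul C
  have hQlim : Tendsto Q (𝓝[>] 0) (𝓝 0) :=
    squeeze_zero_norm' (hnear.mono fun y hy => hQ₀ y hy.1 hy.2) hsmall
  have hQ'lim : Tendsto (fun y => y * deriv Q y) (𝓝[>] 0) (𝓝 0) := by
    refine squeeze_zero_norm' (hnear.mono fun y hy => ?_) hsmall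
    have hpow : y * y ^ (γ - 1 - 1) = y ^ (γ - 1) := by
      rw [rpow_sub_one hy.1.ne', mul_div_cancel₀ _ hy.1.ne']
    rw [norm_mul, norm_of_nonneg hy.1.le, norm_eq_abs, ← hpow, mul_left_comm]
    exact mul_le_mul_of_nonneg_left (hQ₁ y hy.1 hy.2) hy.1.le
  have hlim := ((hQlim.const_add 1).const_mul γ |>.add hQ'lim).const_mul κ
  rw [add_zero, add_zero, mul_one] at hlim
  refine hlim.congr' (hnear.mono fun y hy => ?_)
  have hPy : P =ᶠ[𝓝 y] fun x => κ * x ^ γ * (1 + Q x) :=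
    eventually_of_mem (isOpen_Ioo.mem_nhds hy) fun x hx => hP x hx.1 hx.2
  exact (deriv_div_rpow_eq_of_eq_mul_rpow hy.1 hPy
    (hQ.differentiableAt (isOpen_Ioo.mem_nhds hy))).symm

lemma sqrt_div_self_mem_of_div_rpow_mem {g m M y r : ℝ} (hy : 0 < y)
    (hg : g / y ^ r ∈ Icc m M) :
    √m * y ^ (r / 2 - 1) ≤ √g / y ∧ √g / y ≤ √M * y ^ (r / 2 - 1) := by
  have hsplit : √g / y = √(g / y ^ r) * y ^ (r / 2 - 1) := by
    have hsqrt : √(y ^ r) = y ^ (r / 2) := by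
      rw [sqrt_eq_rpow, ← rpow_mul hy.le, mul_one_div]
    conv_lhs => rw [← div_mul_cancel₀ g (rpow_pos_of_pos hy r).ne']
    rw [sqrt_mul' _ (rpow_nonneg hy.le r), hsqrt, rpow_sub_one hy.ne', mul_div_assoc]
  rw [hsplit]
  exact ⟨by gcongr; exact hg.1, by gcongr; exact hg.2⟩

lemma integral_bounds_of_rpow_bounds {f : ℝ → ℝ} {a b s ρ : ℝ} (hs : 0 < s) (hρ : 0 ≤ ρ)
    (hf : ContinuousOn f (Ioc 0 ρ))
    (hab : ∀ y ∈ Ioc 0 ρ, a * y ^ (s - 1) ≤ f y ∧ f y ≤ b * y ^ (s - 1)) :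
    a / s * ρ ^ s ≤ ∫ y in (0 : ℝ)..ρ, f y ∧ ∫ y in (0 : ℝ)..ρ, f y ≤ b / s * ρ ^ s := by
  have hpow : IntervalIntegrable (fun y : ℝ => y ^ (s - 1)) volume 0 ρ :=
    intervalIntegral.intervalIntegrable_rpow' (by linarith)
  have hf_int : IntervalIntegrable f volume 0 ρ := by
    rw [intervalIntegrable_iff_integrableOn_Ioc_of_le hρ] at hpow ⊢
    refine (hpow.const_mul (max |a| |b|)).mono' (hf.aestronglyMeasurable measurableSet_Ioc) ?_
    refine (ae_restrict_iff' measurableSet_Ioc).mpr (Eventually.of_forall fun y hy => ?_)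
    have hy_pow : 0 ≤ y ^ (s - 1) := rpow_nonneg hy.1.le _
    calc ‖f y‖ ≤ max |a * y ^ (s - 1)| |b * y ^ (s - 1)| :=
          abs_le_max_abs_abs (hab y hy).1 (hab y hy).2
      _ = max |a| |b| * y ^ (s - 1) := by
          rw [abs_mul, abs_mul, abs_of_nonneg hy_pow, max_mul_of_nonneg _ _ hy_pow]
  have hintegral : ∀ c : ℝ, ∫ y in (0 : ℝ)..ρ, c * y ^ (s - 1) = c / s * ρ ^ s := fun c => by
    rw [intervalIntegral.integral_const_mul, integral_rpow (Or.inl (by linarith)),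
      sub_add_cancel, zero_rpow hs.ne', sub_zero, div_mul_eq_mul_div, mul_div_assoc]
  rw [← hintegral a, ← hintegral b]
  exact ⟨intervalIntegral.integral_mono_on_of_le_Ioo hρ (hpow.const_mul a) hf_int
      fun y hy => (hab y (Ioo_subset_Ioc_self hy)).1,
    intervalIntegral.integral_mono_on_of_le_Ioo hρ hf_int (hpow.const_mul b)
      fun y hy => (hab y (Ioo_subset_Ioc_self hy)).2⟩

lemma exists_one_le_inv_le_and_le {c : ℝ} (hc : 0 < c) (d : ℝ) :
    ∃ C : ℝ, 1 ≤ C ∧ C⁻¹ ≤ c ∧ d ≤ C := by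
  refine ⟨max (max c⁻¹ d) 1, le_max_right _ _, ?_, le_max_of_le_left (le_max_right _ _)⟩
  calc (max (max c⁻¹ d) 1)⁻¹ ≤ c⁻¹⁻¹ :=
        inv_anti₀ (inv_pos.mpr hc) (le_max_of_le_left (le_max_left _ _))
    _ = c := inv_inv c

/-- Under the general pressure law hypotheses, near the vacuum `K(ρ)` is comparable to
`ρ^{θ₁}` with `θ₁ = (γ₁ - 1)/2`. -/
theorem K_bounds_near_vacuum
    (P : ℝ → ℝ) (ρs ρS γ₁ γ₂ κ₁ κ₂ b Cs CS : ℝ)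
    (h : GeneralPressureLaw P ρs ρS γ₁ γ₂ κ₁ κ₂ b Cs CS) :
    ∃ C : ℝ, 1 ≤ C ∧ ∃ ρ₀ : ℝ, 0 < ρ₀ ∧ ρ₀ ≤ ρs ∧
      ∀ ρ : ℝ, 0 < ρ → ρ ≤ ρ₀ →
        C⁻¹ * ρ ^ ((γ₁ - 1) / 2) ≤ Kfun P ρ ∧ Kfun P ρ ≤ C * ρ ^ ((γ₁ - 1) / 2) := by
  obtain ⟨P₁, -, hP₁, -, hP, -, hP₁_bound, -⟩ := h.expansion
  have hγ₁ : 1 < γ₁ := h.one_lt_γ₂.trans_le h.γ₂_le_γ₁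
  have hθ : 0 < (γ₁ - 1) / 2 := by linarith
  have hκγ : 0 < κ₁ * γ₁ := mul_pos h.κ₁_pos (by linarith)
  have hlim := tendsto_deriv_div_rpow_nhdsGT_zero hγ₁ h.ρs_pos
    ((hP₁.differentiableOn (by norm_num)).mono Ioo_subset_Ioi_self)
    (fun y hy hys => hP y hy.le hys)
    (by simpa using hP₁_bound 0 (by norm_num)) (by simpa using hP₁_bound 1 (by norm_num))
  obtain ⟨u, hu, hpinched⟩ := mem_nhdsGT_iff_exists_Ioc_subset.mp <|
    hlim.eventually (Icc_mem_nhds (half_lt_self hκγ) (lt_two_mul_self hκγ))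
  obtain ⟨C, hC, hC_lower, hC_upper⟩ := exists_one_le_inv_le_and_le
    (div_pos (sqrt_pos.mpr (half_pos hκγ)) hθ) (√(2 * (κ₁ * γ₁)) / ((γ₁ - 1) / 2))
  refine ⟨C, hC, min u ρs, lt_min hu h.ρs_pos, min_le_right _ _, fun ρ hρ hρu => ?_⟩
  have hcont : ContinuousOn (fun y => √(deriv P y) / y) (Ioc 0 ρ) :=
    ((h.smooth_C4.continuousOn_deriv_of_isOpen isOpen_Ioi (by norm_num)).sqrt.div
      continuousOn_id fun y hy => hy.ne').mono fun y hy => hy.1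
  obtain ⟨hlower, hupper⟩ := integral_bounds_of_rpow_bounds hθ hρ.le hcont fun y hy =>
    sqrt_div_self_mem_of_div_rpow_mem hy.1
      (hpinched ⟨hy.1, hy.2.trans (hρu.trans (min_le_left _ _))⟩)
  have hρθ : 0 ≤ ρ ^ ((γ₁ - 1) / 2) := rpow_nonneg hρ.le _
  exact ⟨(mul_le_mul_of_nonneg_right hC_lower hρθ).trans hlower,
    hupper.trans (mul_le_mul_of_nonneg_right hC_upper hρθ)⟩
end

section
/- Under the general pressure law hypotheses there exist a constant C ≥ 1 and a threshold ρ₁ ≥ ρ* such that for all ρ ≥ ρ₁: C⁻¹ρ^{γ₂} ≤ P(ρ) ≤ Cρ^{γ₂}, C⁻¹ρ^{γ₂−1} ≤ P′(ρ) ≤ Cρ^{γ₂−1}, C⁻¹ρ^{γ₂−1} ≤ e(ρ) ≤ Cρ^{γ₂−1}, C⁻¹ρ^{γ₂−2} ≤ e′(ρ) ≤ Cρ^{γ₂−2}, and C⁻¹ρ^{θ₂} ≤ K(ρ) ≤ Cρ^{θ₂}, where θ₂ = (γ₂−1)/2. -/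
/-!
In the far field `P = κ₂ ρ^γ₂ (1 + P₂)` with `P₂` and `ρ P₂'` both `O(ρ^(-b))`, so
`P ∼ κ₂ ρ^γ₂` and `P' ∼ κ₂ γ₂ ρ^(γ₂-1)`. The integrands `P/ρ²` and `√P'/ρ` of `e` and `K` are
then asymptotic to powers `ρ^r` with `r > -1`, and integrating preserves such an equivalence
because the integral of the power diverges; the vacuum expansion is only needed to make the
integrands integrable at `0`. An equivalence `f ∼ κ ρ^r` with `κ > 0` gives the two-sided bounds
for every large enough constant, so a single constant serves all five quantities.
-/

open Real Set

open Filter Topology Asymptotics MeasureTheory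

namespace Asymptotics

variable {α : Type*} {l : Filter α}

theorem IsEquivalent.sqrt {u v : α → ℝ} (h : u ~[l] v) (hv : ∀ᶠ x in l, 0 ≤ v x) :
    (fun x => √(u x)) ~[l] fun x => √(v x) := by
  obtain ⟨φ, hφ, hu⟩ := h.exists_eq_mul
  refine isEquivalent_iff_exists_eq_mul.2 ⟨fun x => √(φ x), by simpa using hφ.sqrt, ?_⟩
  filter_upwards [hu, hv] with x hx hvx
  simp only [hx, Pi.mul_apply, Real.sqrt_mul' _ hvx]

theorem isEquivalent_mul_const_of_tendsto {u v w : α → ℝ} {c : ℝ} (hc : c ≠ 0)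
    (hw : Tendsto w l (𝓝 c)) (huvw : ∀ᶠ x in l, u x = v x * w x) :
    u ~[l] fun x => v x * c :=
  (IsEquivalent.refl.mul ((isEquivalent_const_iff_tendsto hc).2 hw)).congr_left
    (huvw.mono fun _ hx => hx.symm)

theorem IsEquivalent.div_rpow {u : ℝ → ℝ} {κ r : ℝ} (h : u ~[atTop] fun x => κ * x ^ r)
    (s : ℝ) : (fun x => u x / x ^ s) ~[atTop] fun x => κ * x ^ (r - s) := by
  refine (h.div (IsEquivalent.refl (u := fun x : ℝ => x ^ s))).congr_right ?_
  filter_upwards [eventually_gt_atTop 0] with x hx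
  simp only [Pi.div_apply, Real.rpow_sub hx, mul_div_assoc]

theorem IsEquivalent.eventually_rpow_bounds {u : ℝ → ℝ} {κ r : ℝ}
    (h : u ~[atTop] fun x => κ * x ^ r) (hκ : 0 < κ) :
    ∀ᶠ C in atTop, ∀ᶠ x in atTop, C⁻¹ * x ^ r ≤ u x ∧ u x ≤ C * x ^ r := by
  filter_upwards [eventually_ge_atTop (2 * κ), eventually_ge_atTop (2 / κ)] with C hCκ hCκ'
  have hC : 0 < C := by linarith
  have hCinv : C⁻¹ ≤ κ / 2 := by
    rw [inv_le_comm₀ hC (by positivity), inv_div]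
    exact hCκ'
  filter_upwards [h.isLittleO.bound (by norm_num : (0:ℝ) < 1 / 2), eventually_ge_atTop 0]
    with x hx hx0
  have hxr : 0 ≤ x ^ r := Real.rpow_nonneg hx0 r
  rw [Pi.sub_apply, Real.norm_eq_abs, Real.norm_eq_abs, abs_of_nonneg (mul_nonneg hκ.le hxr),
    abs_le] at hx
  have hlo := mul_le_mul_of_nonneg_right hCinv hxr
  have hhi := mul_le_mul_of_nonneg_right hCκ hxr
  constructor <;> nlinarith [hx.1, hx.2]

theorem IsLittleO.intervalIntegral_atTop {f g : ℝ → ℝ} {a : ℝ} (hfg : f =o[atTop] g)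
    (hg : ∀ᶠ x in atTop, 0 ≤ g x)
    (hf_int : ∀ᶠ x in atTop, IntervalIntegrable f volume a x)
    (hg_int : ∀ᶠ x in atTop, IntervalIntegrable g volume a x)
    (hg_top : Tendsto (fun x => ∫ y in a..x, g y) atTop atTop) :
    (fun x => ∫ y in a..x, f y) =o[atTop] fun x => ∫ y in a..x, g y := by
  -- Beyond `b` the tail is at most `c/2 · ∫ g`; the part over `[a, b]` is a constant,
  -- absorbed by the other `c/2 · ∫ g` since `∫ g → ∞`.
  rw [isLittleO_iff]
  intro c hc
  obtain ⟨b, hb⟩ := eventually_atTop.1 <|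
    (hfg.bound (half_pos hc)).and (hg.and (hf_int.and hg_int))
  obtain ⟨-, -, hfb, hgb⟩ := hb b le_rfl
  set Fb := ∫ y in a..b, f y
  set Gb := ∫ y in a..b, g y
  filter_upwards [eventually_ge_atTop b, hf_int, hg_int,
    hg_top.eventually_ge_atTop (2 / c * ‖Fb‖ + |Gb|)] with x hbx hfx hgx hGx
  have htail : ‖∫ y in b..x, f y‖ ≤ c / 2 * ((∫ y in a..x, g y) - Gb) := by
    rw [intervalIntegral.integral_interval_sub_left hgx hgb, ← intervalIntegral.integral_const_mul]
    refine intervalIntegral.norm_integral_le_of_norm_le hbx (ae_of_all _ fun y hy => ?_)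
      ((hgb.symm.trans hgx).const_mul _)
    obtain ⟨hfy, hgy, -⟩ := hb y hy.1.le
    rwa [Real.norm_eq_abs (g y), abs_of_nonneg hgy] at hfy
  have hGx0 : 0 ≤ ∫ y in a..x, g y := le_trans (by positivity) hGx
  have hFb : c / 2 * (2 / c * ‖Fb‖) = ‖Fb‖ := by field_simp
  rw [← intervalIntegral.integral_add_adjacent_intervals hfb (hfb.symm.trans hfx),
    Real.norm_eq_abs (∫ y in a..x, g y), abs_of_nonneg hGx0]
  calc ‖Fb + ∫ y in b..x, f y‖ ≤ ‖Fb‖ + ‖∫ y in b..x, f y‖ := norm_add_le _ _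
    _ ≤ c * ∫ y in a..x, g y := by nlinarith [neg_abs_le Gb]

theorem IsEquivalent.intervalIntegral_atTop {f g : ℝ → ℝ} {a : ℝ} (hfg : f ~[atTop] g)
    (hg : ∀ᶠ x in atTop, 0 ≤ g x)
    (hf_int : ∀ᶠ x in atTop, IntervalIntegrable f volume a x)
    (hg_int : ∀ᶠ x in atTop, IntervalIntegrable g volume a x)
    (hg_top : Tendsto (fun x => ∫ y in a..x, g y) atTop atTop) :
    (fun x => ∫ y in a..x, f y) ~[atTop] fun x => ∫ y in a..x, g y := by
  refine IsLittleO.isEquivalent ((hfg.isLittleO.intervalIntegral_atTop hg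
    ((hf_int.and hg_int).mono fun _ h => h.1.sub h.2) hg_int hg_top).congr' ?_ EventuallyEq.rfl)
  filter_upwards [hf_int, hg_int] with x hfx hgx
  exact intervalIntegral.integral_sub hfx hgx

theorem IsEquivalent.intervalIntegral_rpow {f : ℝ → ℝ} {κ r : ℝ} (hκ : 0 < κ) (hr : -1 < r)
    (hf : f ~[atTop] fun x => κ * x ^ r)
    (hf_int : ∀ᶠ x in atTop, IntervalIntegrable f volume 0 x) :
    (fun x => ∫ y in (0:ℝ)..x, f y) ~[atTop] fun x => κ / (r + 1) * x ^ (r + 1) := by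
  have hG : (fun x => ∫ y in (0:ℝ)..x, κ * y ^ r) = fun x => κ / (r + 1) * x ^ (r + 1) := by
    funext x
    rw [intervalIntegral.integral_const_mul, integral_rpow (Or.inl hr),
      Real.zero_rpow (by linarith)]
    ring
  rw [← hG]
  refine hf.intervalIntegral_atTop ?_ hf_int
    (Eventually.of_forall fun x => (intervalIntegral.intervalIntegrable_rpow' hr).const_mul κ) ?_
  · filter_upwards [eventually_ge_atTop 0] with x hx using by positivity
  · rw [hG]
    exact (tendsto_rpow_atTop (by linarith)).const_mul_atTop (div_pos hκ (by linarith))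

end Asymptotics

section PowerLaw

variable {P Q : ℝ → ℝ} {κ γ : ℝ}

theorem deriv_eq_of_eventuallyEq_rpow_mul_one_add {x : ℝ} (hx : 0 < x)
    (hP : P =ᶠ[𝓝 x] fun y => κ * y ^ γ * (1 + Q y)) (hQ : DifferentiableAt ℝ Q x) :
    deriv P x = κ * x ^ (γ - 1) * (γ * (1 + Q x) + x * deriv Q x) := by
  have hd : HasDerivAt (fun y => κ * y ^ γ * (1 + Q y))
      (κ * (γ * x ^ (γ - 1)) * (1 + Q x) + κ * x ^ γ * deriv Q x) x :=
    ((Real.hasDerivAt_rpow_const (Or.inl hx.ne')).const_mul κ).mul (hQ.hasDerivAt.const_add 1)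
  rw [hP.deriv_eq, hd.deriv, Real.rpow_sub_one hx.ne']
  field_simp

theorem abs_le_of_eq_rpow_mul_one_add {s : Set ℝ} (hs : IsOpen s) (hs0 : s ⊆ Ioi 0)
    (hP : ∀ y ∈ s, P y = κ * y ^ γ * (1 + Q y)) (hQd : DifferentiableOn ℝ Q s) {B : ℝ}
    (hQ : ∀ y ∈ s, |Q y| ≤ B) (hQ' : ∀ y ∈ s, |y * deriv Q y| ≤ B) {y : ℝ} (hy : y ∈ s) :
    |P y| ≤ |κ| * (1 + B) * y ^ γ ∧
      |deriv P y| ≤ |κ| * (|γ| * (1 + B) + B) * y ^ (γ - 1) := by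
  have hy0 : 0 < y := hs0 hy
  have hPy : P =ᶠ[𝓝 y] fun z => κ * z ^ γ * (1 + Q z) :=
    eventually_of_mem (hs.mem_nhds hy) hP
  have h1 : |1 + Q y| ≤ 1 + B := (abs_add_le _ _).trans (by simp [hQ y hy])
  have h2 : |γ * (1 + Q y) + y * deriv Q y| ≤ |γ| * (1 + B) + B :=
    (abs_add_le _ _).trans (add_le_add (by rw [abs_mul]; gcongr) (hQ' y hy))
  rw [hP y hy, deriv_eq_of_eventuallyEq_rpow_mul_one_add hy0 hPy
    (hQd.differentiableAt (hs.mem_nhds hy))]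
  constructor
  · rw [abs_mul, abs_mul, abs_of_pos (Real.rpow_pos_of_pos hy0 _), mul_right_comm]
    gcongr
  · rw [abs_mul, abs_mul, abs_of_pos (Real.rpow_pos_of_pos hy0 _), mul_right_comm]
    gcongr

theorem isEquivalent_rpow_of_eq_rpow_mul_one_add {a : ℝ}
    (hP : ∀ x, a ≤ x → P x = κ * x ^ γ * (1 + Q x)) (hQ : Tendsto Q atTop (𝓝 0)) :
    P ~[atTop] fun x => κ * x ^ γ := by
  simpa using isEquivalent_mul_const_of_tendsto one_ne_zero (by simpa using hQ.const_add 1)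
    ((eventually_ge_atTop a).mono hP)

theorem deriv_isEquivalent_rpow_of_eq_rpow_mul_one_add {a : ℝ} (hγ : γ ≠ 0)
    (hP : ∀ x, a ≤ x → P x = κ * x ^ γ * (1 + Q x)) (hQd : DifferentiableOn ℝ Q (Ioi a))
    (hQ : Tendsto Q atTop (𝓝 0)) (hQ' : Tendsto (fun x => x * deriv Q x) atTop (𝓝 0)) :
    deriv P ~[atTop] fun x => κ * γ * x ^ (γ - 1) := by
  have hw : Tendsto (fun x => γ * (1 + Q x) + x * deriv Q x) atTop (𝓝 γ) := by
    simpa using ((hQ.const_add 1).const_mul γ).add hQ'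
  refine (isEquivalent_mul_const_of_tendsto (v := fun x => κ * x ^ (γ - 1)) hγ hw ?_).congr_right
    (Eventually.of_forall fun x => by ring)
  filter_upwards [eventually_gt_atTop (max a 0)] with x hx
  have hax : a < x := (le_max_left _ _).trans_lt hx
  exact deriv_eq_of_eventuallyEq_rpow_mul_one_add ((le_max_right _ _).trans_lt hx)
    (eventually_of_mem (Ioi_mem_nhds hax) fun y hy => hP y (le_of_lt hy))
    (hQd.differentiableAt (Ioi_mem_nhds hax))

theorem tendsto_zero_of_abs_le_rpow_neg {u : ℝ → ℝ} {c b : ℝ} (hb : 0 < b)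
    (hu : ∀ᶠ x in atTop, |u x| ≤ c * x ^ (-b)) : Tendsto u atTop (𝓝 0) :=
  squeeze_zero_norm' hu (by simpa using (tendsto_rpow_neg_atTop hb).const_mul c)

end PowerLaw

theorem Real.sqrt_mul_rpow (c : ℝ) {y : ℝ} (hy : 0 ≤ y) (r : ℝ) :
    √(c * y ^ r) = √c * y ^ (r / 2) := by
  rw [Real.sqrt_mul' c (Real.rpow_nonneg hy r), Real.sqrt_eq_rpow (y ^ r), ← Real.rpow_mul hy,
    mul_one_div]

theorem intervalIntegrable_of_abs_le_rpow {f : ℝ → ℝ} {M r δ x : ℝ} (hr : -1 < r)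
    (hδ : 0 < δ) (hx : 0 ≤ x) (hf : ContinuousOn f (Ioi 0))
    (hbound : ∀ y ∈ Ioo 0 δ, |f y| ≤ M * y ^ r) : IntervalIntegrable f volume 0 x := by
  have hδ2 : 0 < δ / 2 := half_pos hδ
  have hnear : IntervalIntegrable f volume 0 (δ / 2) := by
    refine ((intervalIntegral.intervalIntegrable_rpow' hr).const_mul M).mono_fun'
      ((hf.mono ?_).aestronglyMeasurable measurableSet_uIoc) ?_
    · rw [uIoc_of_le hδ2.le]
      exact Ioc_subset_Ioi_self
    · filter_upwards [ae_restrict_mem measurableSet_uIoc] with y hy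
      rw [uIoc_of_le hδ2.le] at hy
      exact hbound y ⟨hy.1, hy.2.trans_lt (half_lt_self hδ)⟩
  rcases le_total x (δ / 2) with hxδ | hxδ
  · exact hnear.mono_set (uIcc_subset_uIcc_left (mem_uIcc_of_le hx hxδ))
  · refine hnear.trans (hf.mono ?_).intervalIntegrable
    rw [uIcc_of_le hxδ]
    exact fun y hy => hδ2.trans_le hy.1

namespace GeneralPressureLaw

variable {P : ℝ → ℝ} {ρs ρS γ₁ γ₂ κ₁ κ₂ b Cs CS : ℝ}

theorem continuousOn_div_sq (h : GeneralPressureLaw P ρs ρS γ₁ γ₂ κ₁ κ₂ b Cs CS) :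
    ContinuousOn (fun y => P y / y ^ 2) (Ioi 0) :=
  h.smooth_C4.continuousOn.div (continuousOn_pow 2) fun _ hy => pow_ne_zero 2 (ne_of_gt hy)

theorem continuousOn_sqrt_deriv_div (h : GeneralPressureLaw P ρs ρS γ₁ γ₂ κ₁ κ₂ b Cs CS) :
    ContinuousOn (fun y => √(deriv P y) / y) (Ioi 0) :=
  (h.smooth_C4.continuousOn_deriv_of_isOpen isOpen_Ioi (by norm_num)).sqrt.div continuousOn_id
    fun _ hy => ne_of_gt hy

theorem exists_abs_le_rpow_near_zero (h : GeneralPressureLaw P ρs ρS γ₁ γ₂ κ₁ κ₂ b Cs CS) :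
    ∃ A, ∀ y ∈ Ioo 0 ρs, |P y| ≤ A * y ^ γ₁ ∧ |deriv P y| ≤ A * y ^ (γ₁ - 1) := by
  obtain ⟨P₁, -, hP₁, -, hexp₁, -, hbd₁, -⟩ := h.expansion
  have hγ₁ : 0 ≤ γ₁ - 1 := by linarith [h.one_lt_γ₂, h.γ₂_le_γ₁]
  have hsmall : ∀ y ∈ Ioo 0 ρs, Cs * y ^ (γ₁ - 1) ≤ Cs * ρs ^ (γ₁ - 1) := fun y hy => by
    have := h.Cs_pos
    gcongr
    · exact hy.1.le
    · exact hy.2.le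
  have hQ : ∀ y ∈ Ioo 0 ρs, |P₁ y| ≤ Cs * ρs ^ (γ₁ - 1) := fun y hy =>
    (show |P₁ y| ≤ Cs * y ^ (γ₁ - 1) by simpa using hbd₁ 0 (by norm_num) y hy.1 hy.2).trans
      (hsmall y hy)
  have hQ' : ∀ y ∈ Ioo 0 ρs, |y * deriv P₁ y| ≤ Cs * ρs ^ (γ₁ - 1) := by
    intro y hy
    have hy0 : 0 < y := hy.1
    have hd : |deriv P₁ y| ≤ Cs * y ^ (γ₁ - 1 - 1) := by
      simpa using hbd₁ 1 (by norm_num) y hy.1 hy.2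
    rw [abs_mul, abs_of_pos hy.1]
    calc y * |deriv P₁ y| ≤ y * (Cs * y ^ (γ₁ - 1 - 1)) := by gcongr
      _ = Cs * y ^ (γ₁ - 1) := by rw [Real.rpow_sub_one hy.1.ne']; field_simp
      _ ≤ Cs * ρs ^ (γ₁ - 1) := hsmall y hy
  set B := Cs * ρs ^ (γ₁ - 1)
  refine ⟨max (|κ₁| * (1 + B)) (|κ₁| * (|γ₁| * (1 + B) + B)), fun y hy => ?_⟩
  obtain ⟨hP, hP'⟩ := abs_le_of_eq_rpow_mul_one_add isOpen_Ioo (fun _ hy => hy.1)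
    (fun y hy => hexp₁ y hy.1.le hy.2)
    ((hP₁.differentiableOn (by norm_num)).mono Ioo_subset_Ioi_self) hQ hQ' hy
  have hy0 := hy.1
  exact ⟨hP.trans (by gcongr; exact le_max_left _ _), hP'.trans (by gcongr; exact le_max_right _ _)⟩

theorem intervalIntegrable_div_sq (h : GeneralPressureLaw P ρs ρS γ₁ γ₂ κ₁ κ₂ b Cs CS)
    {x : ℝ} (hx : 0 ≤ x) : IntervalIntegrable (fun y => P y / y ^ 2) volume 0 x := by
  obtain ⟨A, hA⟩ := h.exists_abs_le_rpow_near_zero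
  refine intervalIntegrable_of_abs_le_rpow (M := A) (r := γ₁ - 2)
    (by linarith [h.one_lt_γ₂, h.γ₂_le_γ₁]) h.ρs_pos hx h.continuousOn_div_sq fun y hy => ?_
  have hy0 : 0 < y := hy.1
  rw [abs_div, abs_of_pos (pow_pos hy0 2), Real.rpow_sub hy0, Real.rpow_two, ← mul_div_assoc]
  gcongr
  exact (hA y hy).1

theorem intervalIntegrable_sqrt_deriv_div (h : GeneralPressureLaw P ρs ρS γ₁ γ₂ κ₁ κ₂ b Cs CS)
    {x : ℝ} (hx : 0 ≤ x) : IntervalIntegrable (fun y => √(deriv P y) / y) volume 0 x := by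
  obtain ⟨A, hA⟩ := h.exists_abs_le_rpow_near_zero
  refine intervalIntegrable_of_abs_le_rpow (M := √A) (r := (γ₁ - 1) / 2 - 1)
    (by linarith [h.one_lt_γ₂, h.γ₂_le_γ₁]) h.ρs_pos hx h.continuousOn_sqrt_deriv_div
    fun y hy => ?_
  have hy0 : 0 < y := hy.1
  rw [abs_of_nonneg (div_nonneg (Real.sqrt_nonneg _) hy0.le), Real.rpow_sub_one hy0.ne',
    ← mul_div_assoc, ← Real.sqrt_mul_rpow A hy0.le]
  gcongr
  exact (le_abs_self _).trans (hA y hy).2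

theorem hasDerivAt_internalEnergy (h : GeneralPressureLaw P ρs ρS γ₁ γ₂ κ₁ κ₂ b Cs CS)
    {x : ℝ} (hx : 0 < x) : HasDerivAt (internalEnergy P) (P x / x ^ 2) x :=
  intervalIntegral.integral_hasDerivAt_right (h.intervalIntegrable_div_sq hx.le)
    (h.continuousOn_div_sq.stronglyMeasurableAtFilter isOpen_Ioi x hx)
    (h.continuousOn_div_sq.continuousAt (Ioi_mem_nhds hx))

theorem exists_far_field_expansion (h : GeneralPressureLaw P ρs ρS γ₁ γ₂ κ₁ κ₂ b Cs CS) :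
    ∃ Q : ℝ → ℝ, DifferentiableOn ℝ Q (Ioi ρS) ∧
      (∀ x, ρS ≤ x → P x = κ₂ * x ^ γ₂ * (1 + Q x)) ∧
      Tendsto Q atTop (𝓝 0) ∧ Tendsto (fun x => x * deriv Q x) atTop (𝓝 0) := by
  obtain ⟨-, P₂, -, hP₂, -, hexp₂, -, hbd₂⟩ := h.expansion
  have hρS : 0 < ρS := h.ρs_pos.trans h.ρs_lt_ρS
  refine ⟨P₂, (hP₂.differentiableOn (by norm_num)).mono (Ioi_subset_Ioi hρS.le), hexp₂,
    tendsto_zero_of_abs_le_rpow_neg h.b_pos ((eventually_ge_atTop ρS).mono fun x hx => by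
      simpa using hbd₂ 0 (by norm_num) x hx),
    tendsto_zero_of_abs_le_rpow_neg (c := CS) h.b_pos ?_⟩
  filter_upwards [eventually_ge_atTop ρS] with x hx
  have hx0 : 0 < x := hρS.trans_le hx
  have hd : |deriv P₂ x| ≤ CS * x ^ (-b - 1) := by simpa using hbd₂ 1 (by norm_num) x hx
  rw [abs_mul, abs_of_pos hx0]
  calc x * |deriv P₂ x| ≤ x * (CS * x ^ (-b - 1)) := by gcongr
    _ = CS * x ^ (-b) := by rw [Real.rpow_sub_one hx0.ne']; field_simp

theorem isEquivalent_atTop (h : GeneralPressureLaw P ρs ρS γ₁ γ₂ κ₁ κ₂ b Cs CS) :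
    P ~[atTop] fun x => κ₂ * x ^ γ₂ :=
  let ⟨_, _, hP, hQ, _⟩ := h.exists_far_field_expansion
  isEquivalent_rpow_of_eq_rpow_mul_one_add hP hQ

theorem deriv_isEquivalent_atTop (h : GeneralPressureLaw P ρs ρS γ₁ γ₂ κ₁ κ₂ b Cs CS) :
    deriv P ~[atTop] fun x => κ₂ * γ₂ * x ^ (γ₂ - 1) :=
  let ⟨_, hQd, hP, hQ, hQ'⟩ := h.exists_far_field_expansion
  deriv_isEquivalent_rpow_of_eq_rpow_mul_one_add (by linarith [h.one_lt_γ₂]) hP hQd hQ hQ'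

theorem div_sq_isEquivalent_atTop (h : GeneralPressureLaw P ρs ρS γ₁ γ₂ κ₁ κ₂ b Cs CS) :
    (fun x => P x / x ^ 2) ~[atTop] fun x => κ₂ * x ^ (γ₂ - 2) := by
  simpa only [Real.rpow_two] using h.isEquivalent_atTop.div_rpow 2

theorem deriv_internalEnergy_isEquivalent_atTop
    (h : GeneralPressureLaw P ρs ρS γ₁ γ₂ κ₁ κ₂ b Cs CS) :
    deriv (internalEnergy P) ~[atTop] fun x => κ₂ * x ^ (γ₂ - 2) :=
  h.div_sq_isEquivalent_atTop.congr_left <|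
    (eventually_gt_atTop 0).mono fun _ hx => (h.hasDerivAt_internalEnergy hx).deriv.symm

theorem internalEnergy_isEquivalent_atTop (h : GeneralPressureLaw P ρs ρS γ₁ γ₂ κ₁ κ₂ b Cs CS) :
    internalEnergy P ~[atTop] fun x => κ₂ / (γ₂ - 1) * x ^ (γ₂ - 1) := by
  have := h.div_sq_isEquivalent_atTop.intervalIntegral_rpow h.κ₂_pos
    (by linarith [h.one_lt_γ₂]) ((eventually_ge_atTop 0).mono fun _ => h.intervalIntegrable_div_sq)
  rwa [show γ₂ - 2 + 1 = γ₂ - 1 by ring] at this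

theorem sqrt_deriv_div_isEquivalent_atTop (h : GeneralPressureLaw P ρs ρS γ₁ γ₂ κ₁ κ₂ b Cs CS) :
    (fun x => √(deriv P x) / x) ~[atTop] fun x => √(κ₂ * γ₂) * x ^ ((γ₂ - 1) / 2 - 1) := by
  have hκγ : 0 ≤ κ₂ * γ₂ := mul_nonneg h.κ₂_pos.le (by linarith [h.one_lt_γ₂])
  have hsqrt : (fun x => √(deriv P x)) ~[atTop] fun x => √(κ₂ * γ₂) * x ^ ((γ₂ - 1) / 2) := by
    refine (h.deriv_isEquivalent_atTop.sqrt ?_).congr_right ?_ <;>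
      filter_upwards [eventually_ge_atTop 0] with x hx
    · exact mul_nonneg hκγ (Real.rpow_nonneg hx _)
    · exact Real.sqrt_mul_rpow _ hx _
  simpa only [Real.rpow_one] using hsqrt.div_rpow 1

theorem Kfun_isEquivalent_atTop (h : GeneralPressureLaw P ρs ρS γ₁ γ₂ κ₁ κ₂ b Cs CS) :
    Kfun P ~[atTop] fun x => √(κ₂ * γ₂) / ((γ₂ - 1) / 2) * x ^ ((γ₂ - 1) / 2) := by
  have hγ₂ := h.one_lt_γ₂
  have := h.sqrt_deriv_div_isEquivalent_atTop.intervalIntegral_rpow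
    (Real.sqrt_pos.2 (mul_pos h.κ₂_pos (by linarith))) (by linarith)
    ((eventually_ge_atTop 0).mono fun _ => h.intervalIntegrable_sqrt_deriv_div)
  rwa [sub_add_cancel] at this

end GeneralPressureLaw

/-- Under the general pressure law hypotheses, at large densities the pressure, its derivative,
the internal energy, its derivative, and `K` are comparable to the corresponding powers of `ρ`
with exponent determined by `γ₂` (where `θ₂ = (γ₂ - 1)/2`). -/
theorem pressure_energy_bounds_at_large_density
    (P : ℝ → ℝ) (ρs ρS γ₁ γ₂ κ₁ κ₂ b Cs CS : ℝ)
    (h : GeneralPressureLaw P ρs ρS γ₁ γ₂ κ₁ κ₂ b Cs CS) :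
    ∃ C : ℝ, 1 ≤ C ∧ ∃ ρ₁ : ℝ, ρS ≤ ρ₁ ∧
      ∀ ρ : ℝ, ρ₁ ≤ ρ →
        C⁻¹ * ρ ^ γ₂ ≤ P ρ ∧ P ρ ≤ C * ρ ^ γ₂ ∧
        C⁻¹ * ρ ^ (γ₂ - 1) ≤ deriv P ρ ∧ deriv P ρ ≤ C * ρ ^ (γ₂ - 1) ∧
        C⁻¹ * ρ ^ (γ₂ - 1) ≤ internalEnergy P ρ ∧ internalEnergy P ρ ≤ C * ρ ^ (γ₂ - 1) ∧
        C⁻¹ * ρ ^ (γ₂ - 2) ≤ deriv (internalEnergy P) ρ ∧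
          deriv (internalEnergy P) ρ ≤ C * ρ ^ (γ₂ - 2) ∧
        C⁻¹ * ρ ^ ((γ₂ - 1) / 2) ≤ Kfun P ρ ∧ Kfun P ρ ≤ C * ρ ^ ((γ₂ - 1) / 2) := by
  have hκ₂ : 0 < κ₂ := h.κ₂_pos
  have hγ₂ : 0 < γ₂ - 1 := sub_pos.2 h.one_lt_γ₂
  have hγ₂' : 0 < γ₂ := by linarith
  obtain ⟨C, hC, hP, hP', he, he', hK⟩ := ((eventually_ge_atTop 1).and <|
    (h.isEquivalent_atTop.eventually_rpow_bounds hκ₂).and <|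
    (h.deriv_isEquivalent_atTop.eventually_rpow_bounds (by positivity)).and <|
    (h.internalEnergy_isEquivalent_atTop.eventually_rpow_bounds (by positivity)).and <|
    (h.deriv_internalEnergy_isEquivalent_atTop.eventually_rpow_bounds hκ₂).and <|
    h.Kfun_isEquivalent_atTop.eventually_rpow_bounds (by positivity)).exists
  obtain ⟨ρ₁, hρ₁⟩ := eventually_atTop.1 (hP.and <| hP'.and <| he.and <| he'.and hK)
  refine ⟨C, hC, max ρ₁ ρS, le_max_right _ _, fun ρ hρ => ?_⟩
  obtain ⟨⟨h₁, h₂⟩, ⟨h₃, h₄⟩, ⟨h₅, h₆⟩, ⟨h₇, h₈⟩, h₉, h₁₀⟩ := hρ₁ ρ (le_of_max_le_left hρ)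
  exact ⟨h₁, h₂, h₃, h₄, h₅, h₆, h₇, h₈, h₉, h₁₀⟩
end

section
/- There exists a constant C_γ > 0, depending only on γ, such that for every ρ ≥ 0 and every ρ∞ > 0: e*(ρ, ρ∞) ≥ C_γ ρ (ρ^θ − ρ∞^θ)². -/
open Real

/-- The polytropic relative internal energy
`e*(ρ, ρ∞) = (κ/(γ−1)) (ρ^γ − ρ∞^γ − γ ρ∞^{γ−1} (ρ − ρ∞))`. -/
noncomputable def relInternalEnergy (γ κ ρ ρinf : ℝ) : ℝ :=
  κ / (γ - 1) * (ρ ^ γ - ρinf ^ γ - γ * ρinf ^ (γ - 1) * (ρ - ρinf))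

/-- Weighted AM-GM step: `(γ+1) a b^{γ-1} ≤ 2 a^{(γ+1)/2} b^{(γ-1)/2} + (γ-1) b^γ`. -/
lemma key_amgm (γ a b : ℝ) (hγ : 1 < γ) (ha : 0 < a) (hb : 0 < b) :
    (γ + 1) * (a * b ^ (γ - 1)) ≤
      2 * (a ^ ((γ + 1) / 2) * b ^ ((γ - 1) / 2)) + (γ - 1) * b ^ γ := by
  have hγ1 : (0:ℝ) < γ + 1 := by linarith
  have hw : 2 / (γ + 1) + (γ - 1) / (γ + 1) = 1 := by field_simp; ring
  have hp₁ : (0:ℝ) ≤ a ^ ((γ + 1) / 2) * b ^ ((γ - 1) / 2) :=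
    mul_nonneg (Real.rpow_nonneg ha.le _) (Real.rpow_nonneg hb.le _)
  have h := Real.geom_mean_le_arith_mean2_weighted
    (by positivity : (0:ℝ) ≤ 2 / (γ + 1))
    (div_nonneg (by linarith) (by linarith) : (0:ℝ) ≤ (γ - 1) / (γ + 1))
    hp₁ (Real.rpow_nonneg hb.le γ) hw
  have heq : (a ^ ((γ + 1) / 2) * b ^ ((γ - 1) / 2)) ^ (2 / (γ + 1)) *
      (b ^ γ) ^ ((γ - 1) / (γ + 1)) = a * b ^ (γ - 1) := by
    rw [Real.mul_rpow (Real.rpow_nonneg ha.le _) (Real.rpow_nonneg hb.le _),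
      ← Real.rpow_mul ha.le, ← Real.rpow_mul hb.le, ← Real.rpow_mul hb.le,
      show (γ + 1) / 2 * (2 / (γ + 1)) = (1:ℝ) by field_simp,
      Real.rpow_one, mul_assoc, ← Real.rpow_add hb]
    congr 1
    congr 1
    field_simp
    ring
  rw [heq] at h
  have := mul_le_mul_of_nonneg_left h hγ1.le
  calc (γ + 1) * (a * b ^ (γ - 1))
      ≤ (γ + 1) * (2 / (γ + 1) * (a ^ ((γ + 1) / 2) * b ^ ((γ - 1) / 2)) +
        (γ - 1) / (γ + 1) * b ^ γ) := this
    _ = 2 * (a ^ ((γ + 1) / 2) * b ^ ((γ - 1) / 2)) + (γ - 1) * b ^ γ := by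
        field_simp

/-- There exists a constant `C_γ > 0` such that
`e*(ρ, ρ∞) ≥ C_γ ρ (ρ^θ − ρ∞^θ)²` for all `ρ ≥ 0` and `ρ∞ > 0`, where `θ = (γ−1)/2`. -/
theorem relInternalEnergy_lower_bound (γ κ : ℝ) (hγ : 1 < γ) (hκ : 0 < κ) :
    ∃ C : ℝ, 0 < C ∧ ∀ ρ : ℝ, 0 ≤ ρ → ∀ ρinf : ℝ, 0 < ρinf →
      C * ρ * (ρ ^ ((γ - 1) / 2) - ρinf ^ ((γ - 1) / 2)) ^ 2 ≤ relInternalEnergy γ κ ρ ρinf := by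
  have hγ0 : (0:ℝ) < γ - 1 := by linarith
  have hC : 0 < κ / (γ - 1) := div_pos hκ hγ0
  refine ⟨κ / (γ - 1), hC, fun ρ hρ ρinf hinf => ?_⟩
  have hb1 : ρinf * ρinf ^ (γ - 1) = ρinf ^ γ := by
    rw [show ρinf * ρinf ^ (γ - 1) = ρinf ^ (1:ℝ) * ρinf ^ (γ - 1) from by rw [Real.rpow_one],
      ← Real.rpow_add hinf]
    ring_nf
  rcases hρ.eq_or_lt with h0 | ha
  · subst h0
    unfold relInternalEnergy
    rw [Real.zero_rpow (by linarith : γ ≠ 0)]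
    have hbpos : 0 < ρinf ^ γ := Real.rpow_pos_of_pos hinf γ
    have : (0:ℝ) - ρinf ^ γ - γ * ρinf ^ (γ - 1) * (0 - ρinf) = (γ - 1) * ρinf ^ γ := by
      nlinarith [hb1]
    rw [this]
    have : κ / (γ - 1) * ((γ - 1) * ρinf ^ γ) = κ * ρinf ^ γ := by
      field_simp
    rw [this]
    nlinarith [hbpos]
  · -- ρ > 0 case
    have h1 : ρ ^ ((γ - 1) / 2) * ρ ^ ((γ - 1) / 2) = ρ ^ (γ - 1) := by
      rw [← Real.rpow_add ha]; ring_nf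
    have h2 : ρ * ρ ^ (γ - 1) = ρ ^ γ := by
      rw [show ρ * ρ ^ (γ - 1) = ρ ^ (1:ℝ) * ρ ^ (γ - 1) from by rw [Real.rpow_one],
        ← Real.rpow_add ha]
      ring_nf
    have h3 : ρ * ρ ^ ((γ - 1) / 2) = ρ ^ ((γ + 1) / 2) := by
      rw [show ρ * ρ ^ ((γ - 1) / 2) = ρ ^ (1:ℝ) * ρ ^ ((γ - 1) / 2) from by rw [Real.rpow_one],
        ← Real.rpow_add ha]
      ring_nf
    have h4 : ρinf ^ ((γ - 1) / 2) * ρinf ^ ((γ - 1) / 2) = ρinf ^ (γ - 1) := by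
      rw [← Real.rpow_add hinf]; ring_nf
    have key := key_amgm γ ρ ρinf hγ ha hinf
    have core : ρ * (ρ ^ ((γ - 1) / 2) - ρinf ^ ((γ - 1) / 2)) ^ 2 ≤
        ρ ^ γ - ρinf ^ γ - γ * ρinf ^ (γ - 1) * (ρ - ρinf) := by
      have expand : ρ * (ρ ^ ((γ - 1) / 2) - ρinf ^ ((γ - 1) / 2)) ^ 2 =
          ρ * (ρ ^ ((γ - 1) / 2) * ρ ^ ((γ - 1) / 2))
          - 2 * ((ρ * ρ ^ ((γ - 1) / 2)) * ρinf ^ ((γ - 1) / 2))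
          + ρ * (ρinf ^ ((γ - 1) / 2) * ρinf ^ ((γ - 1) / 2)) := by ring
      rw [expand, h1, h3, h4, h2]
      nlinarith [key, hb1]
    unfold relInternalEnergy
    have := mul_le_mul_of_nonneg_left core hC.le
    nlinarith [this]
end

section
/- Let q̆ = q^ψ be the entropy flux generated by ψ(s) = ½ s|s|. Then there exists a constant C(γ) > 0, depending only on γ, such that for all ρ > 0 and u ∈ ℝ: q̆(ρ, u) ≥ C(γ)^{−1}(ρ|u|³ + ρ^{γ+θ}). -/
open Real MeasureTheory

/-- `θ = (γ − 1)/2`. -/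
noncomputable def thetaExp (γ : ℝ) : ℝ := (γ - 1) / 2

/-- `λ = (3 − γ)/(2(γ − 1))`. -/
noncomputable def lamExp (γ : ℝ) : ℝ := (3 - γ) / (2 * (γ - 1))

/-- The weak entropy of the isentropic Euler system with polytropic pressure, generated by `ψ`:
`η^ψ(ρ, u) = ρ ∫_{−1}^{1} ψ(u + ρ^θ s)(1 − s²)^λ ds`. -/
noncomputable def entropy (γ : ℝ) (ψ : ℝ → ℝ) (ρ u : ℝ) : ℝ :=
  ρ * ∫ s in (-1:ℝ)..1, ψ (u + ρ ^ thetaExp γ * s) * (1 - s ^ 2) ^ lamExp γ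

/-- The weak entropy flux generated by `ψ`:
`q^ψ(ρ, u) = ρ ∫_{−1}^{1} (u + θρ^θ s) ψ(u + ρ^θ s)(1 − s²)^λ ds`. -/
noncomputable def entropyFlux (γ : ℝ) (ψ : ℝ → ℝ) (ρ u : ℝ) : ℝ :=
  ρ * ∫ s in (-1:ℝ)..1,
    (u + thetaExp γ * ρ ^ thetaExp γ * s) * ψ (u + ρ ^ thetaExp γ * s) * (1 - s ^ 2) ^ lamExp γ

/-!
Pair `s` with `-s` in the defining integral: with `b = ρ^θ s` the integrand becomes
`½ [(u + θb)(u + b)|u + b| + (u - θb)(u - b)|u - b|] (1 - s²)^λ`. The bracket is invariant under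
`u ↦ -u` and `b ↦ -b`, and for `u, b ≥ 0` it is at least `min(1, θ) (u³ + b³)`. Integrating against
the weight, which is integrable because `λ > -1`, gives `q̆ ≥ c (ρ|u|³ + ρ^{1+3θ})`, and
`1 + 3θ = γ + θ`.
-/

lemma rpow_le_max_one_two_rpow {t : ℝ} (ht₁ : 1 ≤ t) (ht₂ : t ≤ 2) (p : ℝ) :
    t ^ p ≤ max 1 (2 ^ p) := by
  rcases le_or_gt 0 p with hp | hp
  · exact le_max_of_le_right (rpow_le_rpow (by linarith) ht₂ hp)
  · exact le_max_of_le_left (rpow_le_one_of_one_le_of_nonpos ht₁ hp.le)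

/- At each end of `[-1, 1]` only one factor of `(1 - s)^λ (1 + s)^λ` is singular, so the weight
is dominated by `M ((1 - s)^λ + (1 + s)^λ)`. -/
lemma intervalIntegrable_one_sub_sq_rpow {lam : ℝ} (hlam : -1 < lam) :
    IntervalIntegrable (fun s : ℝ => (1 - s ^ 2) ^ lam) volume (-1) 1 := by
  set M := max 1 ((2 : ℝ) ^ lam)
  have hdom : IntervalIntegrable (fun s : ℝ => M * ((1 - s) ^ lam + (1 + s) ^ lam))
      volume (-1) 1 := by
    have h := intervalIntegral.intervalIntegrable_rpow' (a := 0) (b := 2) hlam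
    refine (IntervalIntegrable.add ?_ ?_).const_mul M
    · convert (h.comp_sub_left 1).symm using 1 <;> norm_num
    · convert h.comp_add_right 1 using 1 <;> norm_num [add_comm]
  have hmeas : Measurable fun s : ℝ => (1 - s ^ 2) ^ lam := by fun_prop
  refine hdom.mono_fun hmeas.aestronglyMeasurable ?_
  rw [Set.uIoc_of_le (by norm_num)]
  filter_upwards [ae_restrict_mem measurableSet_Ioc] with s ⟨hs₁, hs₂⟩
  have hM : 0 ≤ M := le_max_of_le_left zero_le_one
  have hsplit : (1 - s ^ 2) ^ lam = (1 - s) ^ lam * (1 + s) ^ lam := by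
    rw [← mul_rpow (by linarith) (by linarith)]; ring_nf
  have h₁ : 0 ≤ (1 - s) ^ lam := rpow_nonneg (by linarith) _
  have h₂ : 0 ≤ (1 + s) ^ lam := rpow_nonneg (by linarith) _
  rw [norm_of_nonneg (by rw [hsplit]; positivity), norm_of_nonneg (by positivity), hsplit]
  rcases le_total 0 s with hs | hs
  · nlinarith [rpow_le_max_one_two_rpow (t := 1 + s) (by linarith) (by linarith) lam]
  · nlinarith [rpow_le_max_one_two_rpow (t := 1 - s) (by linarith) (by linarith) lam]

lemma integral_one_sub_sq_rpow_pos {lam : ℝ} (hlam : -1 < lam) :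
    0 < ∫ s in (-1 : ℝ)..1, (1 - s ^ 2) ^ lam :=
  intervalIntegral.intervalIntegral_pos_of_pos_on (intervalIntegrable_one_sub_sq_rpow hlam)
    (fun s hs => rpow_pos_of_pos (by nlinarith [hs.1, hs.2]) _) (by norm_num)

lemma integral_abs_pow_three_mul_one_sub_sq_rpow_pos {lam : ℝ} (hlam : -1 < lam) :
    0 < ∫ s in (-1 : ℝ)..1, |s| ^ 3 * (1 - s ^ 2) ^ lam := by
  have hint : ∀ a b, a ∈ Set.Icc (-1 : ℝ) 1 → b ∈ Set.Icc (-1 : ℝ) 1 →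
      IntervalIntegrable (fun s : ℝ => |s| ^ 3 * (1 - s ^ 2) ^ lam) volume a b := fun a b ha hb =>
    ((intervalIntegrable_one_sub_sq_rpow hlam).mono_set
      (Set.uIcc_subset_uIcc (by simpa using ha) (by simpa using hb))).continuousOn_mul
      (by fun_prop)
  have hleft : 0 ≤ ∫ s in (-1 : ℝ)..0, |s| ^ 3 * (1 - s ^ 2) ^ lam :=
    intervalIntegral.integral_nonneg (by norm_num) fun s hs =>
      mul_nonneg (by positivity) (rpow_nonneg (by nlinarith [hs.1, hs.2]) _)
  have hright : 0 < ∫ s in (0 : ℝ)..1, |s| ^ 3 * (1 - s ^ 2) ^ lam :=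
    intervalIntegral.intervalIntegral_pos_of_pos_on (hint 0 1 (by norm_num) (by norm_num))
      (fun s hs => mul_pos (by simp [hs.1.ne']) (rpow_pos_of_pos (by nlinarith [hs.1, hs.2]) _))
      (by norm_num)
  rw [← intervalIntegral.integral_add_adjacent_intervals (hint (-1) 0 (by norm_num) (by norm_num))
    (hint 0 1 (by norm_num) (by norm_num))]
  linarith

lemma min_one_mul_cube_add_cube_le_of_nonneg {θ a b : ℝ} (hθ : 0 < θ) (ha : 0 ≤ a) (hb : 0 ≤ b) :
    min 1 θ * (a ^ 3 + b ^ 3) ≤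
      (a + θ * b) * ((a + b) * |a + b|) + (a - θ * b) * ((a - b) * |a - b|) := by
  have hm₁ : min 1 θ ≤ 1 := min_le_left _ _
  have hmθ : min 1 θ ≤ θ := min_le_right _ _
  rw [abs_of_nonneg (by linarith : 0 ≤ a + b)]
  rcases le_total b a with hba | hab
  · -- the right-hand side is `2a³ + 2ab² + 4θab² ≥ 2a³ ≥ a³ + b³`
    rw [abs_of_nonneg (by linarith : 0 ≤ a - b)]
    nlinarith [pow_le_pow_left₀ hb hba 3, mul_nonneg (mul_nonneg hθ.le ha) (mul_nonneg hb hb),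
      pow_nonneg ha 3, pow_nonneg hb 3, lt_min one_pos hθ]
  · -- the right-hand side is `4a²b + 2θa²b + 2θb³ ≥ 2θb³ ≥ θ(a³ + b³)`
    rw [abs_of_nonpos (by linarith : a - b ≤ 0)]
    nlinarith [pow_le_pow_left₀ ha hab 3, mul_nonneg (mul_nonneg ha ha) hb,
      mul_nonneg (mul_nonneg hθ.le (mul_nonneg ha ha)) hb, pow_nonneg ha 3, pow_nonneg hb 3,
      lt_min one_pos hθ]

lemma min_one_mul_abs_cube_add_abs_cube_le {θ : ℝ} (hθ : 0 < θ) (a b : ℝ) :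
    min 1 θ * (|a| ^ 3 + |b| ^ 3) ≤
      (a + θ * b) * ((a + b) * |a + b|) + (a - θ * b) * ((a - b) * |a - b|) := by
  convert min_one_mul_cube_add_cube_le_of_nonneg hθ (abs_nonneg a) (abs_nonneg b) using 1
  rcases abs_choice a with ha | ha <;> rcases abs_choice b with hb | hb <;> rw [ha, hb] <;>
    simp only [neg_add_eq_sub, sub_neg_eq_add, ← sub_eq_add_neg, ← neg_add', abs_neg,
      abs_sub_comm b a] <;>
    ring

lemma le_integral_flux_half_mul_abs {θ lam : ℝ} (hθ : 0 < θ) (hlam : -1 < lam) (u r : ℝ) :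
    min 1 θ / 4 * (|u| ^ 3 * (∫ s in (-1 : ℝ)..1, (1 - s ^ 2) ^ lam)
        + |r| ^ 3 * ∫ s in (-1 : ℝ)..1, |s| ^ 3 * (1 - s ^ 2) ^ lam) ≤
      ∫ s in (-1 : ℝ)..1,
        (u + θ * r * s) * ((u + r * s) * |u + r * s| / 2) * (1 - s ^ 2) ^ lam := by
  set F : ℝ → ℝ := fun s => (u + θ * r * s) * ((u + r * s) * |u + r * s| / 2) * (1 - s ^ 2) ^ lam
  have hw := intervalIntegrable_one_sub_sq_rpow hlam
  have hw₃ : IntervalIntegrable (fun s : ℝ => |s| ^ 3 * (1 - s ^ 2) ^ lam) volume (-1) 1 :=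
    hw.continuousOn_mul (by fun_prop)
  have hF : IntervalIntegrable F volume (-1) 1 := hw.continuousOn_mul (by fun_prop)
  have hF_neg : IntervalIntegrable (fun s => F (-s)) volume (-1) 1 := by
    simpa using (IntervalIntegrable.iff_comp_neg (f := F)).mp hF |>.symm
  have hpt : ∀ s ∈ Set.Icc (-1 : ℝ) 1, min 1 θ / 2 * (|u| ^ 3 * (1 - s ^ 2) ^ lam
      + |r| ^ 3 * (|s| ^ 3 * (1 - s ^ 2) ^ lam)) ≤ F s + F (-s) := by
    intro s hs
    have hw_nonneg : 0 ≤ (1 - s ^ 2) ^ lam := rpow_nonneg (by nlinarith [hs.1, hs.2]) _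
    have hpair : F s + F (-s) = ((u + θ * (r * s)) * ((u + r * s) * |u + r * s|)
        + (u - θ * (r * s)) * ((u - r * s) * |u - r * s|)) / 2 * (1 - s ^ 2) ^ lam := by
      simp only [F, neg_sq, mul_neg, ← sub_eq_add_neg]; ring
    rw [hpair]
    have hbound := mul_le_mul_of_nonneg_right (min_one_mul_abs_cube_add_abs_cube_le hθ u (r * s))
      hw_nonneg
    rw [abs_mul, mul_pow] at hbound
    linarith
  calc min 1 θ / 4 * (|u| ^ 3 * (∫ s in (-1 : ℝ)..1, (1 - s ^ 2) ^ lam)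
        + |r| ^ 3 * ∫ s in (-1 : ℝ)..1, |s| ^ 3 * (1 - s ^ 2) ^ lam)
      = (∫ s in (-1 : ℝ)..1, min 1 θ / 2 * (|u| ^ 3 * (1 - s ^ 2) ^ lam
          + |r| ^ 3 * (|s| ^ 3 * (1 - s ^ 2) ^ lam))) / 2 := by
        rw [intervalIntegral.integral_const_mul, intervalIntegral.integral_add
          (hw.const_mul _) (hw₃.const_mul _), intervalIntegral.integral_const_mul,
          intervalIntegral.integral_const_mul]
        ring
    _ ≤ (∫ s in (-1 : ℝ)..1, (F s + F (-s))) / 2 := by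
        gcongr
        exact intervalIntegral.integral_mono_on (by norm_num)
          (((hw.const_mul _).add (hw₃.const_mul _)).const_mul _) (hF.add hF_neg) hpt
    _ = ∫ s in (-1 : ℝ)..1, F s := by
        rw [intervalIntegral.integral_add hF hF_neg, intervalIntegral.integral_comp_neg]
        norm_num

lemma thetaExp_pos {γ : ℝ} (hγ : 1 < γ) : 0 < thetaExp γ := by
  unfold thetaExp; linarith

lemma neg_one_lt_lamExp {γ : ℝ} (hγ : 1 < γ) : -1 < lamExp γ := by
  unfold lamExp
  rw [lt_div_iff₀ (by linarith)]
  linarith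

lemma mul_rpow_thetaExp_pow_three {γ ρ : ℝ} (hρ : 0 < ρ) :
    ρ * (ρ ^ thetaExp γ) ^ 3 = ρ ^ (γ + thetaExp γ) := by
  have hexp : γ + thetaExp γ = 1 + thetaExp γ * (3 : ℕ) := by unfold thetaExp; push_cast; ring
  rw [hexp, rpow_add hρ, rpow_one, rpow_mul_natCast hρ.le]

/-- The entropy flux `q̆ = q^ψ` generated by `ψ(s) = ½ s|s|` satisfies
`q̆(ρ, u) ≥ C(γ)⁻¹ (ρ|u|³ + ρ^{γ+θ})` for all `ρ > 0`, `u ∈ ℝ`. -/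
theorem entropyFlux_half_s_abs_s_lower_bound (γ : ℝ) (hγ : 1 < γ) :
    ∃ C : ℝ, 0 < C ∧ ∀ ρ : ℝ, 0 < ρ → ∀ u : ℝ,
      C⁻¹ * (ρ * |u| ^ 3 + ρ ^ (γ + thetaExp γ)) ≤
        entropyFlux γ (fun s => s * |s| / 2) ρ u := by
  have hθ := thetaExp_pos hγ
  have hlam := neg_one_lt_lamExp hγ
  set W₀ := ∫ s in (-1 : ℝ)..1, (1 - s ^ 2) ^ lamExp γ
  set W₃ := ∫ s in (-1 : ℝ)..1, |s| ^ 3 * (1 - s ^ 2) ^ lamExp γ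
  have hW : 0 < min W₀ W₃ := lt_min (integral_one_sub_sq_rpow_pos hlam)
    (integral_abs_pow_three_mul_one_sub_sq_rpow_pos hlam)
  refine ⟨(min 1 (thetaExp γ) / 4 * min W₀ W₃)⁻¹, by positivity, fun ρ hρ u => ?_⟩
  set r := ρ ^ thetaExp γ
  have hr : |r| = r := abs_of_pos (rpow_pos_of_pos hρ _)
  calc (min 1 (thetaExp γ) / 4 * min W₀ W₃)⁻¹⁻¹ * (ρ * |u| ^ 3 + ρ ^ (γ + thetaExp γ))
      = min 1 (thetaExp γ) / 4 * (ρ * |u| ^ 3 * min W₀ W₃ + ρ * |r| ^ 3 * min W₀ W₃) := by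
        rw [inv_inv, hr, mul_rpow_thetaExp_pow_three hρ]; ring
    _ ≤ min 1 (thetaExp γ) / 4 * (ρ * |u| ^ 3 * W₀ + ρ * |r| ^ 3 * W₃) := by
        gcongr
        exacts [min_le_left _ _, min_le_right _ _]
    _ = ρ * (min 1 (thetaExp γ) / 4 * (|u| ^ 3 * W₀ + |r| ^ 3 * W₃)) := by ring
    _ ≤ entropyFlux γ (fun s => s * |s| / 2) ρ u :=
        mul_le_mul_of_nonneg_left (le_integral_flux_half_mul_abs hθ hlam u r) hρ.le
end
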